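/- arXiv:2201.08199 — 2 statements merged into one kernel-verified Lean document; each statement's English description precedes it below -/
import Mathlib

section
/- Let Γ be a divisible linearly ordered additive abelian group and K a real closed field of characteristic 0. Then the Hahn series field HahnSeries Γ K is real closed: −1 is not a square in HahnSeries Γ K and the field (HahnSeries Γ K)[X]/(X²+1) obtained by adjoining a square root of −1 is algebraically closed. -/
/-!
If `p` has no root, Newton's method can be run transfinitely. At an approximate root `t`, the
steepest edge of the Newton polygon of `p(t + X)` has a slope `γ` (this uses divisibility of `Γ`),
and the terms on that edge form a residue polynomial of positive degree, which has a root `b`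
because the residue field is algebraically closed. Adding `single γ b` to `t` strictly increases
the slope. Since Hahn series are maximally complete, a chain of such steps has a pseudo-limit
from which one can continue, so Zorn's lemma yields an approximate root admitting no Newton step: a
contradiction. Hence Hahn series over `K(i)` are algebraically closed, and adjoining `i` to
`HahnSeries Γ K` gives exactly these. That `-1` is not a square follows from the
multiplicativity of leading coefficients.
-/

open Polynomial

namespace Polynomial

theorem eval_hasseDeriv_rootMultiplicity_ne_zero {R : Type*} [CommRing R] {f : R[X]}
    (hf : f ≠ 0) (b : R) : (hasseDeriv (f.rootMultiplicity b) f).eval b ≠ 0 := by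
  rw [← taylor_coeff, rootMultiplicity_eq_natTrailingDegree, ← taylor_apply]
  exact mt trailingCoeff_eq_zero.1 ((taylor_eq_zero b f).not.2 hf)

end Polynomial

namespace HahnSeries

variable {Γ R : Type*}

section Order

variable [LinearOrder Γ] [Zero R]

theorem order_eq_of_le_orderTop [Zero Γ] {x : HahnSeries Γ R} {d : Γ} (hd : ↑d ≤ x.orderTop)
    (hx : x.coeff d ≠ 0) : x.order = d :=
  le_antisymm (order_le_of_coeff_ne_zero hx) <| WithTop.coe_le_coe.1 <|
    (order_eq_orderTop_of_ne_zero (ne_zero_of_coeff_ne_zero hx)).symm ▸ hd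

theorem coe_order_le_orderTop [Zero Γ] (x : HahnSeries Γ R) :
    (x.order : WithTop Γ) ≤ x.orderTop := by
  rcases eq_or_ne x 0 with rfl | hx
  · simp
  · exact (order_eq_orderTop_of_ne_zero hx).le

end Order

theorem le_orderTop_sum [LinearOrder Γ] [AddCommMonoid R] {ι : Type*} {s : Finset ι}
    {x : ι → HahnSeries Γ R} {d : WithTop Γ} (h : ∀ i ∈ s, d ≤ (x i).orderTop) :
    d ≤ (∑ i ∈ s, x i).orderTop := by
  refine le_orderTop_iff_forall.2 fun g hg => ?_
  rw [coeff_sum]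
  exact Finset.sum_eq_zero fun i hi => coeff_eq_zero_of_lt_orderTop (hg.trans_le (h i hi))

section Semiring

variable [AddCommMonoid Γ] [LinearOrder Γ] [IsOrderedCancelAddMonoid Γ] [Semiring R]

theorem coeff_mul_of_le_orderTop {x y : HahnSeries Γ R} {d e : Γ} (hd : ↑d ≤ x.orderTop)
    (he : ↑e ≤ y.orderTop) : (x * y).coeff (d + e) = x.coeff d * y.coeff e := by
  rw [coeff_mul, Finset.sum_eq_single (d, e)]
  · rintro ⟨i, j⟩ hij hne
    obtain ⟨hi, hj, hij⟩ := Finset.mem_antidiagonal.1 hij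
    have hdi : d ≤ i := WithTop.coe_le_coe.1 (hd.trans (orderTop_le_of_coeff_ne_zero hi))
    have hej : e ≤ j := WithTop.coe_le_coe.1 (he.trans (orderTop_le_of_coeff_ne_zero hj))
    obtain ⟨rfl, rfl⟩ := (add_eq_add_iff_eq_and_eq hdi hej).1 hij.symm
    exact absurd rfl hne
  · intro hde
    rcases not_and_or.1 (mt Finset.mem_antidiagonal.2 hde) with h | h
    · rw [of_not_not (mt (mem_support _ _).2 h), zero_mul]
    · rcases not_and_or.1 h with h | h
      · rw [of_not_not (mt (mem_support _ _).2 h), mul_zero]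
      · exact absurd rfl h

theorem le_orderTop_pow {x : HahnSeries Γ R} {d : Γ} (hd : ↑d ≤ x.orderTop) (n : ℕ) :
    ↑(n • d) ≤ (x ^ n).orderTop := by
  rw [WithTop.coe_nsmul]
  exact (nsmul_le_nsmul_right hd n).trans orderTop_nsmul_le_orderTop_pow

theorem coeff_pow_of_le_orderTop {x : HahnSeries Γ R} {d : Γ} (hd : ↑d ≤ x.orderTop)
    (n : ℕ) :
    (x ^ n).coeff (n • d) = x.coeff d ^ n := by
  induction n with
  | zero => simp [coeff_one]
  | succ n ih => rw [pow_succ, succ_nsmul, coeff_mul_of_le_orderTop (le_orderTop_pow hd n) hd,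
      ih, pow_succ]

end Semiring

theorem exists_forall_coeff_eq [LinearOrder Γ] [Zero R] {ι : Type*} (x : ι → HahnSeries Γ R)
    (b : ι → Γ) (h : ∀ i j g, g < b i → g < b j → (x i).coeff g = (x j).coeff g) :
    ∃ y : HahnSeries Γ R, ∀ i g, g < b i → y.coeff g = (x i).coeff g := by
  classical
  let f : Γ → R := fun g => if hg : ∃ i, g < b i then (x hg.choose).coeff g else 0
  have hf : ∀ i g, g < b i → f g = (x i).coeff g := fun i g hg =>
    (dif_pos ⟨i, hg⟩).trans (h _ i g (⟨i, hg⟩ : ∃ i, g < b i).choose_spec hg)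
  refine ⟨⟨f, (Set.isWF_iff_no_descending_seq.2 fun seq hseq hmem => ?_).isPWO⟩, hf⟩
  obtain ⟨i, hi⟩ : ∃ i, seq 0 < b i := by_contra fun hno => hmem 0 (dif_neg hno)
  refine Set.isWF_iff_no_descending_seq.1 (x i).isWF_support seq hseq fun n => ?_
  rw [mem_support, ← hf i _ ((hseq.antitone n.zero_le).trans_lt hi)]
  exact hmem n

noncomputable def mapRingHom [AddCommMonoid Γ] [PartialOrder Γ] [IsOrderedCancelAddMonoid Γ]
    {S : Type*} [Semiring R] [Semiring S] (f : R →+* S) :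
    HahnSeries Γ R →+* HahnSeries Γ S where
  toFun x := x.map f
  map_one' := HahnSeries.map_one f.toMonoidWithZeroHom
  map_mul' _ _ := HahnSeries.map_mul f.toNonUnitalRingHom
  map_zero' := HahnSeries.map_zero f.toZeroHom
  map_add' _ _ := HahnSeries.map_add f.toAddMonoidHom

section Residue

variable [AddCommGroup Γ] [LinearOrder Γ] [IsOrderedAddMonoid Γ] [Semiring R]

/-- The terms of `q` on the line of slope `-γ` through `(0, d)` of its Newton diagram. -/
noncomputable def residuePoly (q : (HahnSeries Γ R)[X]) (d γ : Γ) : R[X] :=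
  ∑ i ∈ q.support, monomial i ((q.coeff i).coeff (d - i • γ))

theorem residuePoly_coeff (q : (HahnSeries Γ R)[X]) (d γ : Γ) (i : ℕ) :
    (residuePoly q d γ).coeff i = (q.coeff i).coeff (d - i • γ) := by
  classical
  rw [residuePoly, finsetSum_coeff, Finset.sum_eq_single i]
  · simp
  · intro j _ hji
    simp [coeff_monomial, hji]
  · intro hi
    simp [notMem_support_iff.1 hi]

variable {q : (HahnSeries Γ R)[X]} {d γ : Γ} {s : HahnSeries Γ R}

theorem le_orderTop_mul_pow {x : HahnSeries Γ R} {e : Γ} (hx : ↑e ≤ x.orderTop)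
    (hs : ↑γ ≤ s.orderTop) (i : ℕ) : ↑(e + i • γ) ≤ (x * s ^ i).orderTop := by
  rw [WithTop.coe_add]
  exact (add_le_add hx (le_orderTop_pow hs i)).trans orderTop_add_le_mul

theorem le_orderTop_eval (hq : ∀ i, ↑(d - i • γ) ≤ (q.coeff i).orderTop)
    (hs : ↑γ ≤ s.orderTop) :
    ↑d ≤ (q.eval s).orderTop := by
  rw [eval_eq_sum, Polynomial.sum_def]
  refine le_orderTop_sum fun i _ => ?_
  simpa using le_orderTop_mul_pow (hq i) hs i

theorem coeff_eval (hq : ∀ i, ↑(d - i • γ) ≤ (q.coeff i).orderTop)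
    (hs : ↑γ ≤ s.orderTop) :
    (q.eval s).coeff d = (residuePoly q d γ).eval (s.coeff γ) := by
  rw [eval_eq_sum, Polynomial.sum_def, coeff_sum, residuePoly, eval_finsetSum]
  refine Finset.sum_congr rfl fun i _ => ?_
  rw [eval_monomial, ← coeff_pow_of_le_orderTop hs, ← coeff_mul_of_le_orderTop (hq i)
    (le_orderTop_pow hs i), sub_add_cancel]

theorem le_orderTop_coeff_hasseDeriv (hq : ∀ i, ↑(d - i • γ) ≤ (q.coeff i).orderTop)
    (m i : ℕ) :
    ↑(d - m • γ - i • γ) ≤ ((hasseDeriv m q).coeff i).orderTop := by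
  rw [hasseDeriv_coeff, ← nsmul_eq_mul, sub_sub, ← add_nsmul, add_comm m]
  exact (hq (i + m)).trans (orderTop_le_orderTop_smul _ _)

theorem residuePoly_hasseDeriv (q : (HahnSeries Γ R)[X]) (d γ : Γ) (m : ℕ) :
    residuePoly (hasseDeriv m q) (d - m • γ) γ = hasseDeriv m (residuePoly q d γ) := by
  ext i
  rw [residuePoly_coeff, hasseDeriv_coeff, hasseDeriv_coeff, residuePoly_coeff, ← nsmul_eq_mul,
    coeff_nsmul, sub_sub, ← add_nsmul, add_comm m, Pi.smul_apply, nsmul_eq_mul]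

end Residue

section NewtonSlope

variable [AddCommGroup Γ] [LinearOrder Γ] [IsOrderedAddMonoid Γ] [DivisibleBy Γ ℕ]
  [Semiring R]

/-- The least `γ` with `(q.coeff 0).order ≤ (q.coeff i).order + i • γ` for all `i`, i.e. the
largest order a root of `q` can have. -/
noncomputable def newtonSlope (q : (HahnSeries Γ R)[X]) : Γ :=
  if h : (q.support.erase 0).Nonempty then
    (q.support.erase 0).sup' h fun i => DivisibleBy.div ((q.coeff 0).order - (q.coeff i).order) i
  else 0

noncomputable def newtonResidue (q : (HahnSeries Γ R)[X]) : R[X] :=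
  residuePoly q (q.coeff 0).order (newtonSlope q)

variable {q : (HahnSeries Γ R)[X]}

theorem div_order_le_newtonSlope {i : ℕ} (hi : i ≠ 0) (hqi : q.coeff i ≠ 0) :
    DivisibleBy.div ((q.coeff 0).order - (q.coeff i).order) i ≤ newtonSlope q := by
  have hmem : i ∈ q.support.erase 0 := Finset.mem_erase.2 ⟨hi, mem_support_iff.2 hqi⟩
  rw [newtonSlope, dif_pos ⟨i, hmem⟩]
  exact Finset.le_sup' (fun i => DivisibleBy.div ((q.coeff 0).order - (q.coeff i).order) i) hmem

theorem le_orderTop_coeff_newtonSlope (q : (HahnSeries Γ R)[X]) (i : ℕ) :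
    ↑((q.coeff 0).order - i • newtonSlope q) ≤ (q.coeff i).orderTop := by
  rcases eq_or_ne (q.coeff i) 0 with hqi | hqi
  · simp [hqi]
  rcases eq_or_ne i 0 with rfl | hi
  · simpa using coe_order_le_orderTop (q.coeff 0)
  have h := nsmul_le_nsmul_right (div_order_le_newtonSlope hi hqi) i
  rw [DivisibleBy.div_cancel _ hi] at h
  rw [← order_eq_orderTop_of_ne_zero hqi, WithTop.coe_le_coe]
  exact sub_le_comm.1 h

theorem lt_newtonSlope {i : ℕ} (hi : i ≠ 0) (hqi : q.coeff i ≠ 0) {g : Γ}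
    (hg : i • g < (q.coeff 0).order - (q.coeff i).order) : g < newtonSlope q := by
  refine (lt_of_nsmul_lt_nsmul_right i ?_).trans_le (div_order_le_newtonSlope hi hqi)
  rwa [DivisibleBy.div_cancel _ hi]

theorem newtonResidue_coeff_zero_ne_zero (h0 : q.coeff 0 ≠ 0) :
    (newtonResidue q).coeff 0 ≠ 0 := by
  simpa [newtonResidue, residuePoly_coeff] using coeff_order_eq_zero.not.2 h0

theorem natDegree_newtonResidue_pos (hq : 0 < q.natDegree) : 0 < (newtonResidue q).natDegree := by
  have hne : (q.support.erase 0).Nonempty :=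
    ⟨q.natDegree, Finset.mem_erase.2
      ⟨hq.ne', natDegree_mem_support_of_nonzero (ne_zero_of_natDegree_gt hq)⟩⟩
  obtain ⟨i, hmem, hi⟩ := Finset.exists_mem_eq_sup' hne
    fun i => DivisibleBy.div ((q.coeff 0).order - (q.coeff i).order) i
  obtain ⟨hi0, hqi⟩ := Finset.mem_erase.1 hmem
  rw [mem_support_iff] at hqi
  refine (Nat.pos_of_ne_zero hi0).trans_le (le_natDegree_of_ne_zero ?_)
  rw [newtonResidue, residuePoly_coeff, newtonSlope, dif_pos hne, hi,
    DivisibleBy.div_cancel _ hi0, sub_sub_cancel]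
  exact coeff_order_eq_zero.not.2 hqi

end NewtonSlope

section NewtonStep

variable [AddCommGroup Γ] [LinearOrder Γ] [IsOrderedAddMonoid Γ] [DivisibleBy Γ ℕ]
  [CommRing R] {q : (HahnSeries Γ R)[X]} {s : HahnSeries Γ R}

theorem order_coeff_zero_lt_order_eval (hs : ↑(newtonSlope q) ≤ s.orderTop)
    (hroot : (newtonResidue q).IsRoot (s.coeff (newtonSlope q))) (hqs : q.eval s ≠ 0) :
    (q.coeff 0).order < (q.eval s).order := by
  have hle := le_orderTop_eval (le_orderTop_coeff_newtonSlope q) hs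
  rw [← order_eq_orderTop_of_ne_zero hqs, WithTop.coe_le_coe] at hle
  refine hle.lt_of_ne fun heq => coeff_order_eq_zero.not.2 hqs ?_
  rw [← heq, coeff_eval (le_orderTop_coeff_newtonSlope q) hs]
  exact hroot

theorem newtonSlope_lt_newtonSlope_taylor (h0 : q.coeff 0 ≠ 0)
    (hs : ↑(newtonSlope q) ≤ s.orderTop)
    (hroot : (newtonResidue q).IsRoot (s.coeff (newtonSlope q))) (hqs : q.eval s ≠ 0) :
    newtonSlope q < newtonSlope (taylor s q) := by
  set γ := newtonSlope q
  set v := (q.coeff 0).order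
  have hres : newtonResidue q ≠ 0 := fun h =>
    newtonResidue_coeff_zero_ne_zero h0 (by rw [h, Polynomial.coeff_zero])
  set m := (newtonResidue q).rootMultiplicity (s.coeff γ)
  have hm : m ≠ 0 := ((rootMultiplicity_pos hres).2 hroot).ne'
  -- The root `s.coeff γ` of the residue has multiplicity `m`, so the `m`-th Taylor coefficient
  -- of `q` at `s` keeps the order `v - m • γ` while the constant one gains order.
  have hD := le_orderTop_coeff_hasseDeriv (le_orderTop_coeff_newtonSlope q) m
  have hcoeff : ((taylor s q).coeff m).coeff (v - m • γ) ≠ 0 := by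
    rw [taylor_coeff, coeff_eval hD hs, residuePoly_hasseDeriv]
    exact eval_hasseDeriv_rootMultiplicity_ne_zero hres _
  have horder : ((taylor s q).coeff m).order = v - m • γ := by
    refine order_eq_of_le_orderTop ?_ hcoeff
    rw [taylor_coeff]
    exact le_orderTop_eval hD hs
  refine lt_newtonSlope hm (ne_zero_of_coeff_ne_zero hcoeff) ?_
  rw [taylor_coeff_zero, horder, sub_sub_eq_add_sub, add_sub_right_comm]
  exact lt_add_of_pos_left _ (sub_pos.2 (order_coeff_zero_lt_order_eval hs hroot hqs))

def IsNewtonStep (p : (HahnSeries Γ R)[X]) (t u : HahnSeries Γ R) : Prop :=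
  ↑(newtonSlope (taylor t p)) ≤ (u - t).orderTop ∧
    (newtonResidue (taylor t p)).IsRoot ((u - t).coeff (newtonSlope (taylor t p)))

variable {p : (HahnSeries Γ R)[X]} {t u w : HahnSeries Γ R}

theorem IsNewtonStep.coeff_eq (h : IsNewtonStep p t u) {g : Γ}
    (hg : g < newtonSlope (taylor t p)) : u.coeff g = t.coeff g := by
  rw [← sub_eq_zero, ← coeff_sub]
  exact coeff_eq_zero_of_lt_orderTop ((WithTop.coe_lt_coe.2 hg).trans_le h.1)

theorem IsNewtonStep.newtonSlope_lt (hp : ∀ x, p.eval x ≠ 0) (h : IsNewtonStep p t u) :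
    newtonSlope (taylor t p) < newtonSlope (taylor u p) := by
  have htu : taylor (u - t) (taylor t p) = taylor u p := by rw [taylor_taylor, sub_add_cancel]
  rw [← htu]
  refine newtonSlope_lt_newtonSlope_taylor ?_ h.1 h.2 ?_
  · rw [taylor_coeff_zero]; exact hp t
  · rw [taylor_eval, sub_add_cancel]; exact hp u

theorem IsNewtonStep.trans (hp : ∀ x, p.eval x ≠ 0) (htu : IsNewtonStep p t u)
    (huw : IsNewtonStep p u w) : IsNewtonStep p t w := by
  have hslope := htu.newtonSlope_lt hp
  have hcoeff : ∀ g, g ≤ newtonSlope (taylor t p) → (w - t).coeff g = (u - t).coeff g :=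
    fun g hg => by rw [coeff_sub, coeff_sub, huw.coeff_eq (hg.trans_lt hslope)]
  refine ⟨le_orderTop_iff_forall.2 fun g hg => ?_, ?_⟩
  · rw [hcoeff g (WithTop.coe_lt_coe.1 hg).le]
    exact coeff_eq_zero_of_lt_orderTop (hg.trans_le htu.1)
  · rw [IsRoot, hcoeff _ le_rfl]
    exact htu.2

theorem exists_newtonStep_bound_of_isChain (hp : ∀ x, p.eval x ≠ 0) {c : Set (HahnSeries Γ R)}
    (hc : IsChain (fun t u => t = u ∨ IsNewtonStep p t u) c) :
    ∃ y, ∀ t ∈ c, t = y ∨ IsNewtonStep p t y := by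
  by_cases hmax : ∃ m ∈ c, ∀ t ∈ c, t = m ∨ IsNewtonStep p t m
  · obtain ⟨m, -, hm⟩ := hmax
    exact ⟨m, hm⟩
  push Not at hmax
  have hsucc : ∀ t ∈ c, ∃ u ∈ c, IsNewtonStep p t u := fun t ht => by
    obtain ⟨u, hu, hut, hnot⟩ := hmax t ht
    refine ⟨u, hu, ?_⟩
    exact ((hc ht hu hut.symm).resolve_right (not_or.2 ⟨hut, hnot⟩)).resolve_left hut.symm
  -- The chain has no largest element, so the pseudo-limit of the chain refines each member.
  obtain ⟨y, hy⟩ := exists_forall_coeff_eq (fun t : c => (t : HahnSeries Γ R))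
    (fun t => newtonSlope (taylor (t : HahnSeries Γ R) p)) fun t u g hgt hgu => by
      rcases eq_or_ne t u with rfl | htu
      · rfl
      rcases hc t.2 u.2 (Subtype.coe_ne_coe.2 htu) with (h | h) | (h | h)
      · rw [h]
      · exact (h.coeff_eq hgt).symm
      · rw [h]
      · exact h.coeff_eq hgu
  refine ⟨y, fun t ht => Or.inr ?_⟩
  obtain ⟨u, hu, htu⟩ := hsucc t ht
  have hslope := htu.newtonSlope_lt hp
  refine ⟨le_orderTop_iff_forall.2 fun g hg => ?_, ?_⟩
  · rw [coeff_sub, hy ⟨t, ht⟩ g (WithTop.coe_lt_coe.1 hg), sub_self]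
  · rw [IsRoot, coeff_sub, hy ⟨u, hu⟩ _ hslope, ← coeff_sub]
    exact htu.2

end NewtonStep

section AlgClosed

variable [AddCommGroup Γ] [LinearOrder Γ] [IsOrderedAddMonoid Γ] [DivisibleBy Γ ℕ] [Field R]
  [IsAlgClosed R] {p : (HahnSeries Γ R)[X]}

theorem exists_isNewtonStep (hdeg : 0 < p.natDegree) (t : HahnSeries Γ R) :
    ∃ u, IsNewtonStep p t u := by
  obtain ⟨b, hb⟩ := IsAlgClosed.exists_root (newtonResidue (taylor t p))
    (natDegree_pos_iff_degree_pos.1 (natDegree_newtonResidue_pos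
      (by rwa [natDegree_taylor]))).ne'
  refine ⟨t + single (newtonSlope (taylor t p)) b, ?_⟩
  rw [IsNewtonStep, add_sub_cancel_left, coeff_single_same]
  exact ⟨orderTop_single_le, hb⟩

theorem isAlgClosed : IsAlgClosed (HahnSeries Γ R) := by
  refine IsAlgClosed.of_exists_root _ fun p _ hirr => ?_
  by_contra! hp
  obtain ⟨M, hM⟩ := exists_maximal_of_chains_bounded
    (fun c hc => exists_newtonStep_bound_of_isChain hp hc) fun {a b c} hab hbc => by
      rcases hab with rfl | hab
      · exact hbc
      rcases hbc with rfl | hbc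
      · exact Or.inr hab
      · exact Or.inr (hab.trans hp hbc)
  obtain ⟨u, hu⟩ := exists_isNewtonStep hirr.natDegree_pos M
  have hMM : IsNewtonStep p M M := by
    rcases hM u (Or.inr hu) with rfl | huM
    · exact hu
    · exact hu.trans hp huM
  exact lt_irrefl _ (hMM.newtonSlope_lt hp)

end AlgClosed

theorem not_exists_sq_eq_neg_one [AddCommMonoid Γ] [LinearOrder Γ] [IsOrderedCancelAddMonoid Γ]
    [Ring R] [NoZeroDivisors R] (hR : ¬∃ y : R, y ^ 2 = -1) :
    ¬∃ y : HahnSeries Γ R, y ^ 2 = -1 := by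
  rintro ⟨y, hy⟩
  refine hR ⟨y.leadingCoeff, ?_⟩
  rw [sq, ← leadingCoeff_mul, ← sq, hy, leadingCoeff_neg, leadingCoeff_one]

section AdjoinRoot

variable [AddCommGroup Γ] [LinearOrder Γ] [IsOrderedAddMonoid Γ] [Field R]

noncomputable def liftAdjoinRoot (f : R[X]) {g : (HahnSeries Γ R)[X]} (hfg : f.map C = g) :
    AdjoinRoot g →+* HahnSeries Γ (AdjoinRoot f) :=
  AdjoinRoot.lift (mapRingHom (AdjoinRoot.of f)) (C (AdjoinRoot.root f)) <| by
    have hC : (mapRingHom (Γ := Γ) (AdjoinRoot.of f)).comp C = C.comp (AdjoinRoot.of f) :=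
      RingHom.ext fun r => map_C r (AdjoinRoot.of f)
    rw [← hfg, eval₂_map, hC, ← hom_eval₂, AdjoinRoot.eval₂_root, map_zero]

-- Expand each coefficient in the power basis `1, root f, root f ^ 2, …` of `AdjoinRoot f`.
theorem liftAdjoinRoot_surjective {f : R[X]} (hf : f ≠ 0) {g : (HahnSeries Γ R)[X]}
    (hfg : f.map C = g) : Function.Surjective (liftAdjoinRoot f hfg) := by
  subst hfg
  intro y
  let B := (AdjoinRoot.powerBasis hf).basis
  refine ⟨∑ j, AdjoinRoot.of _ (y.map (B.coord j)) * AdjoinRoot.root _ ^ (j : ℕ), ?_⟩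
  ext a
  simp only [liftAdjoinRoot, map_sum, map_mul, map_pow, AdjoinRoot.lift_of, AdjoinRoot.lift_root,
    coeff_sum]
  conv_rhs => rw [← B.sum_repr (y.coeff a)]
  refine Finset.sum_congr rfl fun j _ => ?_
  rw [← map_pow, C_apply, coeff_mul_single_zero, PowerBasis.basis_eq_pow,
    AdjoinRoot.powerBasis_gen, Algebra.smul_def, AdjoinRoot.algebraMap_eq]
  rfl

noncomputable def adjoinRootEquiv (f : R[X]) [Fact (Irreducible f)] (g : (HahnSeries Γ R)[X])
    [Fact (Irreducible g)] (hfg : f.map C = g) : AdjoinRoot g ≃+* HahnSeries Γ (AdjoinRoot f) :=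
  .ofBijective (liftAdjoinRoot f hfg)
    ⟨RingHom.injective _, liftAdjoinRoot_surjective (Fact.out : Irreducible f).ne_zero hfg⟩

end AdjoinRoot

end HahnSeries

theorem hahnSeries_realClosed_general {Γ K : Type*} [AddCommGroup Γ] [LinearOrder Γ] [IsOrderedAddMonoid Γ]
    [Field K]
    (hdiv : ∀ (g : Γ) (n : ℕ), 0 < n → ∃ g' : Γ, n • g' = g)
    (hK1 : ¬∃ y : K, y ^ 2 = -1)
    [Fact (Irreducible (X ^ 2 + 1 : K[X]))]
    (hK2 : IsAlgClosed (AdjoinRoot (X ^ 2 + 1 : K[X]))) :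
    (¬∃ y : HahnSeries Γ K, y ^ 2 = -1) ∧
      ∀ hi : Fact (Irreducible (X ^ 2 + 1 : Polynomial (HahnSeries Γ K))),
        letI := hi
        IsAlgClosed (AdjoinRoot (X ^ 2 + 1 : Polynomial (HahnSeries Γ K))) := by
  refine ⟨HahnSeries.not_exists_sq_eq_neg_one hK1, fun _ => ?_⟩
  let _ : DivisibleBy Γ ℕ :=
    divisibleByOfSMulRightSurj Γ ℕ fun hn g => hdiv g _ (Nat.pos_of_ne_zero hn)
  have : IsAlgClosed (HahnSeries Γ (AdjoinRoot (X ^ 2 + 1 : K[X]))) := HahnSeries.isAlgClosed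
  exact .of_ringEquiv _ _ (HahnSeries.adjoinRootEquiv (X ^ 2 + 1) (X ^ 2 + 1) (by simp)).symm

/-- If `Γ` is a divisible linearly ordered abelian group and `K` a real closed field of
characteristic 0 (`-1` is not a square in `K` and `K[X]/(X²+1)` is algebraically closed),
then the Hahn series field `HahnSeries Γ K` is real closed: `-1` is not a square in it and
`(HahnSeries Γ K)[X]/(X²+1)` is algebraically closed. -/
theorem hahnSeries_realClosed {Γ K : Type*} [AddCommGroup Γ] [LinearOrder Γ] [IsOrderedAddMonoid Γ]
    [Field K] [CharZero K]
    (hdiv : ∀ (g : Γ) (n : ℕ), 0 < n → ∃ g' : Γ, n • g' = g)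
    (hK1 : ¬∃ y : K, y ^ 2 = -1)
    [Fact (Irreducible (X ^ 2 + 1 : K[X]))]
    (hK2 : IsAlgClosed (AdjoinRoot (X ^ 2 + 1 : K[X]))) :
    (¬∃ y : HahnSeries Γ K, y ^ 2 = -1) ∧
      ∀ hi : Fact (Irreducible (X ^ 2 + 1 : Polynomial (HahnSeries Γ K))),
        letI := hi
        IsAlgClosed (AdjoinRoot (X ^ 2 + 1 : Polynomial (HahnSeries Γ K))) :=
  hahnSeries_realClosed_general hdiv hK1 hK2
end

section
/- Let Γ be a linearly ordered additive abelian group and S a subset of the strictly positive elements of Γ that is well-ordered (for the order of Γ) of order type α. Then the additive submonoid ⟨S⟩ generated by S in Γ is itself a well-ordered subset of Γ, of order type at most ω^(ω ⨳ α), where ⨳ denotes the natural (Hessenberg) product of ordinals. -/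
open scoped Ordinal

/-- Natural (Hessenberg) sum of ordinals (formerly Mathlib's `Ordinal.nadd`). -/
noncomputable def Ordinal.nadd (a b : Ordinal.{u}) : Ordinal.{u} :=
  max (⨆ x : Set.Iio a, Order.succ (Ordinal.nadd x.1 b))
    (⨆ x : Set.Iio b, Order.succ (Ordinal.nadd a x.1))
termination_by (a, b)
decreasing_by
  · exact Prod.Lex.left _ _ x.2
  · exact Prod.Lex.right _ x.2

infixl:65 " ♯ " => Ordinal.nadd

/-- Natural (Hessenberg) product of ordinals (formerly Mathlib's `Ordinal.nmul`). -/
noncomputable def Ordinal.nmul : Ordinal.{u} → Ordinal.{u} → Ordinal.{u}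
  | a, b => sInf {c | ∀ a' < a, ∀ b' < b,
      Ordinal.nmul a' b ♯ Ordinal.nmul a b' < c ♯ Ordinal.nmul a' b'}
termination_by a b => (a, b)

infixl:70 " ⨳ " => Ordinal.nmul

open Classical in
/-- The order type of a subset of a linear order, when it is well-ordered
(and `0` otherwise). -/
noncomputable def Set.orderTypeLT {Γ : Type*} [LinearOrder Γ] (S : Set Γ) : Ordinal :=
  if h : S.IsWF then
    @Ordinal.type S (· < ·)
      { toTrichotomous := inferInstance
        toIsWellFounded := ⟨h⟩ }
  else 0

/-!
Induct on the order type `ot S`; write `T` for the submonoid generated by `S`. A nonzero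
`x ∈ T` is a sum of `k` generators whose largest summand is some `t ∈ S`, so every `y < x`
in `T` uses at most `k` generators `≥ t` and the initial segment of `T` below `x` lies in
`k • ({0} ∪ S_{≥t}) + ⟨S_{<t}⟩`. Sumsets obey `ot (A + B) ≤ ω ^ (u ♯ v)` whenever
`ot A ≤ ω ^ u` and `ot B ≤ ω ^ v`: below `a + b`, the set `A + B` is covered by
`A_{<a} + B` and `A + B_{<b}`, and `ω ^ e` is closed under `♯`. With `δ = log_ω ot S_{≥t}`,
so that `ot S_{<t} + ω ^ δ ≤ ot S`, induction on `S_{<t}` bounds that initial segment by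
`ω ^ ((δ + 1) ⨳ k ♯ ω ⨳ ot S_{<t}) < ω ^ (ω ⨳ ot S)`.
-/

open Ordinal

namespace Ordinal

theorem nadd_def (a b : Ordinal) : a ♯ b = max (⨆ x : Set.Iio a, Order.succ (x.1 ♯ b))
    (⨆ x : Set.Iio b, Order.succ (a ♯ x.1)) := by
  rw [Ordinal.nadd]

theorem nadd_le_iff {a b c : Ordinal} :
    b ♯ c ≤ a ↔ (∀ b' < b, b' ♯ c < a) ∧ ∀ c' < c, b ♯ c' < a := by
  rw [nadd_def, max_le_iff, Ordinal.iSup_le_iff, Ordinal.iSup_le_iff]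
  simp only [Order.succ_le_iff, Subtype.forall, Set.mem_Iio]

theorem lt_nadd_iff {a b c : Ordinal} :
    a < b ♯ c ↔ (∃ b' < b, a ≤ b' ♯ c) ∨ ∃ c' < c, a ≤ b ♯ c' := by
  rw [← not_le, nadd_le_iff]
  simp only [not_and_or, not_forall, not_lt, exists_prop]

theorem nadd_lt_nadd_left {b c : Ordinal} (h : b < c) (a : Ordinal) : a ♯ b < a ♯ c :=
  lt_nadd_iff.2 (Or.inr ⟨b, h, le_rfl⟩)

theorem nadd_lt_nadd_right {b c : Ordinal} (h : b < c) (a : Ordinal) : b ♯ a < c ♯ a :=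
  lt_nadd_iff.2 (Or.inl ⟨b, h, le_rfl⟩)

theorem nadd_le_nadd_left {b c : Ordinal} (h : b ≤ c) (a : Ordinal) : a ♯ b ≤ a ♯ c := by
  rcases h.lt_or_eq with h | rfl
  exacts [(nadd_lt_nadd_left h a).le, le_rfl]

theorem nadd_le_nadd_right {b c : Ordinal} (h : b ≤ c) (a : Ordinal) : b ♯ a ≤ c ♯ a := by
  rcases h.lt_or_eq with h | rfl
  exacts [(nadd_lt_nadd_right h a).le, le_rfl]

theorem nadd_le_nadd {a b c d : Ordinal} (h₁ : a ≤ b) (h₂ : c ≤ d) : a ♯ c ≤ b ♯ d :=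
  (nadd_le_nadd_right h₁ c).trans (nadd_le_nadd_left h₂ b)

theorem nadd_lt_nadd {a b c d : Ordinal} (h₁ : a < b) (h₂ : c < d) : a ♯ c < b ♯ d :=
  (nadd_lt_nadd_right h₁ c).trans (nadd_lt_nadd_left h₂ b)

theorem nadd_lt_nadd_of_lt_of_le {a b c d : Ordinal} (h₁ : a < b) (h₂ : c ≤ d) :
    a ♯ c < b ♯ d :=
  (nadd_lt_nadd_right h₁ c).trans_le (nadd_le_nadd_left h₂ b)

theorem nadd_lt_nadd_of_le_of_lt {a b c d : Ordinal} (h₁ : a ≤ b) (h₂ : c < d) :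
    a ♯ c < b ♯ d :=
  (nadd_le_nadd_right h₁ c).trans_lt (nadd_lt_nadd_left h₂ b)

theorem nadd_lt_nadd_iff_left (a : Ordinal) {b c : Ordinal} : a ♯ b < a ♯ c ↔ b < c :=
  ⟨fun h => lt_of_not_ge fun h' => (nadd_le_nadd_left h' a).not_gt h,
    fun h => nadd_lt_nadd_left h a⟩

theorem nadd_comm (a b : Ordinal) : a ♯ b = b ♯ a := by
  induction a using WellFoundedLT.induction generalizing b with | _ a IHa =>
  induction b using WellFoundedLT.induction with | _ b IHb =>
  refine le_antisymm (nadd_le_iff.2 ⟨fun a' ha' => ?_, fun b' hb' => ?_⟩)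
    (nadd_le_iff.2 ⟨fun b' hb' => ?_, fun a' ha' => ?_⟩)
  · rw [IHa a' ha' b]; exact nadd_lt_nadd_left ha' b
  · rw [IHb b' hb']; exact nadd_lt_nadd_right hb' a
  · rw [← IHb b' hb']; exact nadd_lt_nadd_left hb' a
  · rw [← IHa a' ha' b]; exact nadd_lt_nadd_right ha' b

theorem le_self_nadd {a b : Ordinal} : a ≤ a ♯ b := by
  induction a using WellFoundedLT.induction with | _ a IH =>
  exact le_of_forall_lt fun c hc => (IH c hc).trans_lt (nadd_lt_nadd_right hc b)

@[simp]
theorem nadd_zero (a : Ordinal) : a ♯ 0 = a := by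
  induction a using WellFoundedLT.induction with | _ a IH =>
  refine le_antisymm (nadd_le_iff.2 ⟨fun a' ha' => ?_, fun c hc => ?_⟩) le_self_nadd
  · rwa [IH a' ha']
  · exact absurd hc (not_lt_of_ge zero_le)

@[simp]
theorem zero_nadd (a : Ordinal) : 0 ♯ a = a := by
  rw [nadd_comm, nadd_zero]

theorem nadd_one (a : Ordinal) : a ♯ 1 = a + 1 := by
  induction a using WellFoundedLT.induction with | _ a IH =>
  refine le_antisymm (nadd_le_iff.2 ⟨fun a' ha' => ?_, fun c hc => ?_⟩) ?_
  · rw [IH a' ha', ← Order.succ_eq_add_one, ← Order.succ_eq_add_one]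
    exact Order.succ_lt_succ ha'
  · rw [Order.lt_one_iff.1 hc, nadd_zero]; exact lt_add_one a
  · rw [← Order.succ_eq_add_one, Order.succ_le_iff]
    simpa using nadd_lt_nadd_left zero_lt_one a

theorem add_le_nadd (a b : Ordinal) : a + b ≤ a ♯ b := by
  induction b using WellFoundedLT.induction with | _ b IH =>
  rcases eq_or_ne b 0 with rfl | hb
  · rw [add_zero, nadd_zero]
  refine le_of_forall_lt fun c hc => ?_
  obtain ⟨d, hd, hcd⟩ := (Ordinal.lt_add_iff hb).1 hc
  exact (hcd.trans (IH d hd)).trans_lt (nadd_lt_nadd_left hd a)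

theorem nadd_assoc (a b c : Ordinal) : a ♯ b ♯ c = a ♯ (b ♯ c) := by
  induction a using WellFoundedLT.induction generalizing b c with | _ a IHa =>
  induction b using WellFoundedLT.induction generalizing c with | _ b IHb =>
  induction c using WellFoundedLT.induction with | _ c IHc =>
  refine le_antisymm (nadd_le_iff.2 ⟨fun d hd => ?_, fun c' hc' => ?_⟩)
    (nadd_le_iff.2 ⟨fun a' ha' => ?_, fun e he => ?_⟩)
  · rcases lt_nadd_iff.1 hd with ⟨a', ha', hd'⟩ | ⟨b', hb', hd'⟩
    · calc d ♯ c ≤ a' ♯ b ♯ c := nadd_le_nadd_right hd' c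
        _ = a' ♯ (b ♯ c) := IHa a' ha' b c
        _ < a ♯ (b ♯ c) := nadd_lt_nadd_right ha' _
    · calc d ♯ c ≤ a ♯ b' ♯ c := nadd_le_nadd_right hd' c
        _ = a ♯ (b' ♯ c) := IHb b' hb' c
        _ < a ♯ (b ♯ c) := nadd_lt_nadd_left (nadd_lt_nadd_right hb' c) a
  · rw [IHc c' hc']
    exact nadd_lt_nadd_left (nadd_lt_nadd_left hc' b) a
  · rw [← IHa a' ha' b c]
    exact nadd_lt_nadd_right (nadd_lt_nadd_right ha' b) c
  · rcases lt_nadd_iff.1 he with ⟨b', hb', he'⟩ | ⟨c', hc', he'⟩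
    · calc a ♯ e ≤ a ♯ (b' ♯ c) := nadd_le_nadd_left he' a
        _ = a ♯ b' ♯ c := (IHb b' hb' c).symm
        _ < a ♯ b ♯ c := nadd_lt_nadd_right (nadd_lt_nadd_left hb' a) c
    · calc a ♯ e ≤ a ♯ (b ♯ c') := nadd_le_nadd_left he' a
        _ = a ♯ b ♯ c' := (IHc c' hc').symm
        _ < a ♯ b ♯ c := nadd_lt_nadd_left hc' _

instance : Std.Associative (α := Ordinal) (· ♯ ·) := ⟨nadd_assoc⟩
instance : Std.Commutative (α := Ordinal) (· ♯ ·) := ⟨nadd_comm⟩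

theorem nmul_def (a b : Ordinal) : a ⨳ b = sInf {c | ∀ a' < a, ∀ b' < b,
    a' ⨳ b ♯ a ⨳ b' < c ♯ a' ⨳ b'} := by
  rw [Ordinal.nmul]

theorem nmul_nadd_lt {a a' b b' : Ordinal} (ha : a' < a) (hb : b' < b) :
    a' ⨳ b ♯ a ⨳ b' < a ⨳ b ♯ a' ⨳ b' := by
  have hne : {c | ∀ a' < a, ∀ b' < b, a' ⨳ b ♯ a ⨳ b' < c ♯ a' ⨳ b'}.Nonempty := by
    refine ⟨⨆ p : Set.Iio a × Set.Iio b, Order.succ (p.1.1 ⨳ b ♯ a ⨳ p.2.1),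
      fun a' ha' b' hb' => lt_of_lt_of_le ?_ le_self_nadd⟩
    exact (Order.lt_succ _).trans_le (Ordinal.le_iSup
      (fun p : Set.Iio a × Set.Iio b => Order.succ (p.1.1 ⨳ b ♯ a ⨳ p.2.1)) (⟨a', ha'⟩, ⟨b', hb'⟩))
  rw [nmul_def a b]
  exact csInf_mem hne a' ha b' hb

theorem nmul_nadd_le {a a' b b' : Ordinal} (ha : a' ≤ a) (hb : b' ≤ b) :
    a' ⨳ b ♯ a ⨳ b' ≤ a ⨳ b ♯ a' ⨳ b' := by
  rcases ha.lt_or_eq with ha | rfl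
  · rcases hb.lt_or_eq with hb | rfl
    · exact (nmul_nadd_lt ha hb).le
    · rw [nadd_comm]
  · exact le_rfl

theorem nmul_le_iff {a b c : Ordinal} :
    a ⨳ b ≤ c ↔ ∀ a' < a, ∀ b' < b, a' ⨳ b ♯ a ⨳ b' < c ♯ a' ⨳ b' := by
  refine ⟨fun h a' ha b' hb => (nmul_nadd_lt ha hb).trans_le (nadd_le_nadd_right h _),
    fun h => ?_⟩
  rw [nmul_def]
  exact csInf_le' h

theorem lt_nmul_iff {a b c : Ordinal} :
    c < a ⨳ b ↔ ∃ a' < a, ∃ b' < b, c ♯ a' ⨳ b' ≤ a' ⨳ b ♯ a ⨳ b' := by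
  rw [← not_le, nmul_le_iff]
  simp only [not_forall, not_lt, exists_prop]

@[simp]
theorem nmul_zero (a : Ordinal) : a ⨳ 0 = 0 :=
  le_antisymm (nmul_le_iff.2 fun _ _ _ hb => absurd hb (not_lt_of_ge zero_le)) zero_le

@[simp]
theorem zero_nmul (a : Ordinal) : 0 ⨳ a = 0 :=
  le_antisymm (nmul_le_iff.2 fun _ ha _ _ => absurd ha (not_lt_of_ge zero_le)) zero_le

theorem nmul_comm (a b : Ordinal) : a ⨳ b = b ⨳ a := by
  induction a using WellFoundedLT.induction generalizing b with | _ a IHa =>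
  induction b using WellFoundedLT.induction with | _ b IHb =>
  refine le_antisymm (nmul_le_iff.2 fun a' ha b' hb => ?_)
    (nmul_le_iff.2 fun b' hb a' ha => ?_)
  · rw [IHa a' ha b, IHb b' hb, IHa a' ha b', nadd_comm]
    exact nmul_nadd_lt hb ha
  · rw [← IHb b' hb, ← IHa a' ha b, ← IHa a' ha b', nadd_comm]
    exact nmul_nadd_lt ha hb

theorem nmul_lt_nmul_of_pos_left {a b c : Ordinal} (h₁ : a < b) (h₂ : 0 < c) :
    c ⨳ a < c ⨳ b :=
  lt_nmul_iff.2 ⟨0, h₂, a, h₁, by simp only [zero_nmul, nadd_zero, zero_nadd, le_refl]⟩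

theorem nmul_le_nmul_left {b c : Ordinal} (h : b ≤ c) (a : Ordinal) : a ⨳ b ≤ a ⨳ c := by
  rcases h.lt_or_eq with h | rfl
  · rcases eq_or_ne a 0 with rfl | ha
    · rw [zero_nmul, zero_nmul]
    · exact (nmul_lt_nmul_of_pos_left h (pos_iff_ne_zero.2 ha)).le
  · exact le_rfl

@[simp]
theorem nmul_one (a : Ordinal) : a ⨳ 1 = a := by
  induction a using WellFoundedLT.induction with | _ a IH =>
  refine le_antisymm (nmul_le_iff.2 fun a' ha b' hb => ?_) (le_of_forall_lt fun c hc => ?_)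
  · rw [Order.lt_one_iff.1 hb, nmul_zero, nmul_zero, nadd_zero, nadd_zero, IH a' ha]
    exact ha
  · rw [← IH c hc, nmul_comm c, nmul_comm a]
    exact nmul_lt_nmul_of_pos_left hc zero_lt_one

theorem nmul_nadd (a b c : Ordinal) : a ⨳ (b ♯ c) = a ⨳ b ♯ a ⨳ c := by
  induction a using WellFoundedLT.induction generalizing b c with | _ a IHa =>
  induction b using WellFoundedLT.induction generalizing c with | _ b IHb =>
  induction c using WellFoundedLT.induction with | _ c IHc =>
  refine le_antisymm (nmul_le_iff.2 fun a' ha d hd => ?_)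
    (nadd_le_iff.2 ⟨fun d hd => ?_, fun d hd => ?_⟩)
  · rw [IHa a' ha b c]
    rcases lt_nadd_iff.1 hd with ⟨b', hb, hd'⟩ | ⟨c', hc, hd'⟩
    · have h := nadd_lt_nadd_of_le_of_lt (nmul_nadd_le ha.le hd') (nmul_nadd_lt ha hb)
      rw [IHa a' ha b' c, IHb b' hb c] at h
      refine (nadd_lt_nadd_iff_left (a' ⨳ b' ♯ a ⨳ b')).1 ?_
      convert h using 1 <;> ac_rfl
    · have h := nadd_lt_nadd_of_le_of_lt (nmul_nadd_le ha.le hd') (nmul_nadd_lt ha hc)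
      rw [IHa a' ha b c', IHc c' hc] at h
      refine (nadd_lt_nadd_iff_left (a' ⨳ c' ♯ a ⨳ c')).1 ?_
      convert h using 1 <;> ac_rfl
  · obtain ⟨a', ha, b', hb, hd'⟩ := lt_nmul_iff.1 hd
    have h := nmul_nadd_lt ha (nadd_lt_nadd_right hb c)
    rw [IHa a' ha b c, IHb b' hb c, IHa a' ha b' c] at h
    refine (nadd_lt_nadd_iff_left (a' ⨳ b' ♯ a' ⨳ c)).1 ?_
    calc a' ⨳ b' ♯ a' ⨳ c ♯ (d ♯ a ⨳ c) = d ♯ a' ⨳ b' ♯ (a' ⨳ c ♯ a ⨳ c) := by ac_rfl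
      _ ≤ a' ⨳ b ♯ a ⨳ b' ♯ (a' ⨳ c ♯ a ⨳ c) := nadd_le_nadd_right hd' _
      _ = a' ⨳ b ♯ a' ⨳ c ♯ (a ⨳ b' ♯ a ⨳ c) := by ac_rfl
      _ < a ⨳ (b ♯ c) ♯ (a' ⨳ b' ♯ a' ⨳ c) := h
      _ = a' ⨳ b' ♯ a' ⨳ c ♯ a ⨳ (b ♯ c) := nadd_comm _ _
  · obtain ⟨a', ha, c', hc, hd'⟩ := lt_nmul_iff.1 hd
    have h := nmul_nadd_lt ha (nadd_lt_nadd_left hc b)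
    rw [IHa a' ha b c, IHc c' hc, IHa a' ha b c'] at h
    refine (nadd_lt_nadd_iff_left (a' ⨳ b ♯ a' ⨳ c')).1 ?_
    calc a' ⨳ b ♯ a' ⨳ c' ♯ (a ⨳ b ♯ d) = d ♯ a' ⨳ c' ♯ (a' ⨳ b ♯ a ⨳ b) := by ac_rfl
      _ ≤ a' ⨳ c ♯ a ⨳ c' ♯ (a' ⨳ b ♯ a ⨳ b) := nadd_le_nadd_right hd' _
      _ = a' ⨳ b ♯ a' ⨳ c ♯ (a ⨳ b ♯ a ⨳ c') := by ac_rfl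
      _ < a ⨳ (b ♯ c) ♯ (a' ⨳ b ♯ a' ⨳ c') := h
      _ = a' ⨳ b ♯ a' ⨳ c' ♯ a ⨳ (b ♯ c) := nadd_comm _ _

theorem mul_le_nmul (a b : Ordinal) : a * b ≤ a ⨳ b := by
  induction b using WellFoundedLT.induction with | _ b IH =>
  refine le_of_forall_lt fun c hc => ?_
  obtain ⟨q, hq, r, hr, rfl⟩ := Ordinal.lt_mul_iff.1 hc
  calc a * q + r ≤ a ⨳ q ♯ r := (add_le_add_left (IH q hq) r).trans (add_le_nadd _ _)
    _ < a ⨳ q ♯ a := nadd_lt_nadd_left hr _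
    _ = a ⨳ (q ♯ 1) := by rw [nmul_nadd, nmul_one]
    _ ≤ a ⨳ b := nmul_le_nmul_left (by rw [nadd_one]; exact Order.add_one_le_of_lt hq) a

theorem nmul_natCast_succ (a : Ordinal) (n : ℕ) : a ⨳ (n + 1 : ℕ) = a ⨳ n ♯ a := by
  rw [Nat.cast_succ, ← nadd_one, nmul_nadd, nmul_one]

theorem nmul_nmul_natCast (a b : Ordinal) (n : ℕ) : a ⨳ (b ⨳ n) = a ⨳ b ⨳ n := by
  induction n with
  | zero => simp
  | succ n ih => rw [nmul_natCast_succ, nmul_nadd, ih, nmul_natCast_succ]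


theorem le_mul_div_nadd_mod (x o : Ordinal) : x ≤ o * (x / o) ♯ x % o :=
  (div_add_mod x o).symm.trans_le (add_le_nadd _ _)

theorem mul_nadd_of_lt {o r : Ordinal} (ho : IsPrincipal (· ♯ ·) o) (q : Ordinal) (hr : r < o) :
    o * q ♯ r = o * q + r := by
  have ho0 : o ≠ 0 := (zero_le.trans_lt hr).ne'
  induction q using WellFoundedLT.induction generalizing r with | _ q IHq =>
  induction r using WellFoundedLT.induction with | _ r IHr =>
  refine le_antisymm (nadd_le_iff.2 ⟨fun x hx => ?_, fun y hy => ?_⟩) (add_le_nadd _ _)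
  · have hq : x / o < q := (lt_mul_iff_div_lt ho0).1 hx
    have hxr : x % o ♯ r < o := ho (mod_lt x ho0) hr
    calc x ♯ r ≤ o * (x / o) ♯ x % o ♯ r := nadd_le_nadd_right (le_mul_div_nadd_mod x o) r
      _ = o * (x / o) + (x % o ♯ r) := by rw [nadd_assoc, IHq _ hq hxr]
      _ < o * (x / o) + o := add_lt_add_right hxr _
      _ = o * (x / o + 1) := (mul_add_one _ _).symm
      _ ≤ o * q := by gcongr; exact Order.add_one_le_of_lt hq
      _ ≤ o * q + r := le_self_add
  · rw [IHr y hy (hy.trans hr)]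
    exact add_lt_add_right hy _

theorem mul_nadd_self {o : Ordinal} (ho : IsPrincipal (· ♯ ·) o) (q : Ordinal) :
    o * q ♯ o = o * (q + 1) := by
  rcases eq_or_ne o 0 with rfl | ho0
  · simp
  induction q using WellFoundedLT.induction with | _ q IH =>
  refine le_antisymm (nadd_le_iff.2 ⟨fun x hx => ?_, fun y hy => ?_⟩) ?_
  · have hq : x / o < q := (lt_mul_iff_div_lt ho0).1 hx
    have hr := mod_lt x ho0
    calc x ♯ o ≤ o * (x / o) ♯ x % o ♯ o := nadd_le_nadd_right (le_mul_div_nadd_mod x o) o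
      _ = o * (x / o) ♯ o ♯ x % o := by rw [nadd_assoc, nadd_comm (x % o), ← nadd_assoc]
      _ = o * (x / o + 1) + x % o := by rw [IH _ hq, mul_nadd_of_lt ho _ hr]
      _ < o * (x / o + 1) + o := add_lt_add_right hr _
      _ = o * (x / o + 1 + 1) := (mul_add_one _ _).symm
      _ ≤ o * (q + 1) := by gcongr; exact Order.add_one_le_of_lt hq
  · rw [mul_nadd_of_lt ho q hy, mul_add_one]
    exact add_lt_add_right hy _
  · rw [mul_add_one]
    exact add_le_nadd _ _

theorem nmul_natCast {o : Ordinal} (ho : IsPrincipal (· ♯ ·) o) (n : ℕ) : o ⨳ n = o * n := by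
  induction n with
  | zero => simp
  | succ n ih => rw [nmul_natCast_succ, ih, mul_nadd_self ho, Nat.cast_succ]

theorem mul_natCast_nadd_mul_natCast {o : Ordinal} (ho : IsPrincipal (· ♯ ·) o) (m n : ℕ) :
    o * m ♯ o * n = o * (m + n : ℕ) := by
  induction n with
  | zero => simp
  | succ n ih =>
    rw [Nat.cast_succ, ← mul_nadd_self ho, ← nadd_assoc, ih, mul_nadd_self ho, ← Nat.add_assoc,
      Nat.cast_succ]

theorem nmul_natCast_lt {p a : Ordinal} (hp : IsPrincipal (· ♯ ·) p) (ha : a < p) (k : ℕ) :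
    a ⨳ k < p := by
  induction k with
  | zero => simpa using zero_le.trans_lt ha
  | succ k ih => rw [nmul_natCast_succ]; exact hp ih ha

theorem omega0_opow_mul_natCast_lt (f : Ordinal) (n : ℕ) : ω ^ f * n < ω ^ (f + 1) := by
  rw [opow_add, opow_one]
  exact (mul_lt_mul_iff_right₀ (opow_pos f omega0_pos)).2 (natCast_lt_omega0 n)

theorem exists_lt_opow_mul_natCast {e a : Ordinal} (he : e ≠ 0) (ha : a < ω ^ e) :
    ∃ f < e, ∃ n : ℕ, a < ω ^ f * n := by
  rcases eq_or_ne a 0 with rfl | ha0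
  · exact ⟨0, pos_iff_ne_zero.2 he, 1, by simp⟩
  refine ⟨log ω a, (lt_opow_iff_log_lt one_lt_omega0 ha0).1 ha, ?_⟩
  have := lt_opow_succ_log_self one_lt_omega0 a
  rw [Order.succ_eq_add_one, opow_add, opow_one,
    lt_mul_iff_of_isSuccLimit isSuccLimit_omega0] at this
  obtain ⟨c, hc, hac⟩ := this
  obtain ⟨n, rfl⟩ := lt_omega0.1 hc
  exact ⟨n, hac⟩

theorem isPrincipal_nadd_omega0_opow (e : Ordinal) : IsPrincipal (· ♯ ·) (ω ^ e) := by
  induction e using WellFoundedLT.induction with | _ e IH =>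
  intro a b ha hb
  rcases eq_or_ne e 0 with rfl | he
  · rw [opow_zero, Order.lt_one_iff] at ha hb
    simp [ha, hb]
  obtain ⟨f, hf, n, hn⟩ := exists_lt_opow_mul_natCast he (max_lt ha hb)
  calc a ♯ b ≤ max a b ♯ max a b := nadd_le_nadd (le_max_left a b) (le_max_right a b)
    _ < ω ^ f * n ♯ ω ^ f * n := nadd_lt_nadd hn hn
    _ = ω ^ f * (n + n : ℕ) := mul_natCast_nadd_mul_natCast (IH f hf) n n
    _ < ω ^ (f + 1) := omega0_opow_mul_natCast_lt f _
    _ ≤ ω ^ e := opow_le_opow_right omega0_pos (Order.add_one_le_of_lt hf)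

theorem nmul_omega0_opow (δ : Ordinal) : ω ⨳ ω ^ δ = ω ^ (δ + 1) := by
  induction δ using WellFoundedLT.induction with | _ δ IH =>
  refine le_antisymm (nmul_le_iff.2 fun a' ha' b' hb' => lt_of_lt_of_le ?_ le_self_nadd) ?_
  · obtain ⟨m, rfl⟩ := lt_omega0.1 ha'
    refine isPrincipal_nadd_omega0_opow _ ?_ ?_
    · rw [nmul_comm, nmul_natCast (isPrincipal_nadd_omega0_opow δ)]
      exact omega0_opow_mul_natCast_lt δ m
    rcases eq_or_ne δ 0 with rfl | hδ
    · rw [opow_zero, Order.lt_one_iff] at hb'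
      rw [hb', nmul_zero]
      exact opow_pos _ omega0_pos
    obtain ⟨f, hf, n, hn⟩ := exists_lt_opow_mul_natCast hδ hb'
    calc ω ⨳ b' ≤ ω ⨳ (ω ^ f ⨳ n) := by
          rw [nmul_natCast (isPrincipal_nadd_omega0_opow f)]
          exact nmul_le_nmul_left hn.le ω
      _ = ω ^ (f + 1) * n := by
          rw [nmul_nmul_natCast, IH f hf, nmul_natCast (isPrincipal_nadd_omega0_opow _)]
      _ < ω ^ (f + 1 + 1) := omega0_opow_mul_natCast_lt _ n
      _ ≤ ω ^ (δ + 1) := opow_le_opow_right omega0_pos (by gcongr; exact Order.add_one_le_of_lt hf)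
  · calc ω ^ (δ + 1) = ω ^ δ * ω := by rw [opow_add, opow_one]
      _ ≤ ω ^ δ ⨳ ω := mul_le_nmul _ _
      _ = ω ⨳ ω ^ δ := nmul_comm _ _

theorem add_one_lt_omega0_opow_add_one (δ : Ordinal) : δ + 1 < ω ^ (δ + 1) :=
  isPrincipal_add_omega0_opow _
    ((right_le_opow δ one_lt_omega0).trans_lt
      ((opow_lt_opow_iff_right one_lt_omega0).2 (lt_add_one δ)))
    (one_lt_omega0.trans_le (left_le_opow ω (zero_le.trans_lt (lt_add_one δ))))

theorem nadd_omega0_nmul_lt {e γ δ α : Ordinal} (he : e < ω ^ (δ + 1)) (hα : γ + ω ^ δ ≤ α) :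
    e ♯ ω ⨳ γ < ω ⨳ α := by
  have hρ : ω ⨳ (γ % ω ^ δ) < ω ^ (δ + 1) := nmul_omega0_opow δ ▸
    nmul_lt_nmul_of_pos_left (mod_lt γ (opow_ne_zero δ omega0_ne_zero)) omega0_pos
  calc e ♯ ω ⨳ γ ≤ e ♯ ω ⨳ (ω ^ δ * (γ / ω ^ δ) ♯ γ % ω ^ δ) :=
        nadd_le_nadd_left (nmul_le_nmul_left (le_mul_div_nadd_mod _ _) ω) e
    _ = ω ⨳ (ω ^ δ * (γ / ω ^ δ)) ♯ (ω ⨳ (γ % ω ^ δ) ♯ e) := by rw [nmul_nadd]; ac_rfl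
    _ < ω ⨳ (ω ^ δ * (γ / ω ^ δ)) ♯ ω ⨳ ω ^ δ := by
        rw [nmul_omega0_opow]
        exact nadd_lt_nadd_left (isPrincipal_nadd_omega0_opow _ hρ he) _
    _ = ω ⨳ (ω ^ δ * (γ / ω ^ δ) + ω ^ δ) := by
        rw [← nmul_nadd, mul_nadd_self (isPrincipal_nadd_omega0_opow δ), mul_add_one]
    _ ≤ ω ⨳ α := nmul_le_nmul_left (hα.trans' (by gcongr; exact mul_div_le γ _)) ω

end Ordinal

namespace Set

section OrderType

variable {Γ : Type*} [LinearOrder Γ] {A B : Set Γ}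

theorem IsWF.wellFoundedLT (hA : A.IsWF) : WellFoundedLT A := ⟨hA⟩

theorem orderTypeLT_eq_type [WellFoundedLT A] : A.orderTypeLT = typeLT A :=
  dif_pos wellFounded_lt

@[simp]
theorem orderTypeLT_empty : (∅ : Set Γ).orderTypeLT = 0 := by
  have := isWF_empty (α := Γ) |>.wellFoundedLT
  rw [orderTypeLT_eq_type, type_eq_zero_iff_isEmpty, isEmpty_coe_sort]

theorem orderTypeLT_eq_zero_iff (hA : A.IsWF) : A.orderTypeLT = 0 ↔ A = ∅ := by
  have := hA.wellFoundedLT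
  rw [orderTypeLT_eq_type, type_eq_zero_iff_isEmpty, isEmpty_coe_sort]

theorem orderTypeLT_mono (hB : B.IsWF) (hAB : A ⊆ B) : A.orderTypeLT ≤ B.orderTypeLT := by
  have := hB.wellFoundedLT
  have := (hB.mono hAB).wellFoundedLT
  rw [orderTypeLT_eq_type, orderTypeLT_eq_type]
  exact type_le_iff'.2 ⟨⟨embeddingOfSubset _ _ hAB, Iff.rfl⟩⟩

theorem orderTypeLT_inter_Iio_eq_typein [WellFoundedLT A] (x : A) :
    (A ∩ Iio x.1).orderTypeLT = typein LT.lt x := by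
  have hA : A.IsWF := wellFounded_lt
  have := (hA.mono (inter_subset_left (t := Iio x.1))).wellFoundedLT
  rw [orderTypeLT_eq_type, ← type_Iio_lt]
  exact OrderIso.ordinalType_congr
    { toFun := fun y => ⟨⟨y, y.2.1⟩, y.2.2⟩
      invFun := fun z => ⟨z.1, z.1.2, z.2⟩
      left_inv := fun _ => rfl
      right_inv := fun _ => rfl
      map_rel_iff' := Iff.rfl }

theorem orderTypeLT_inter_Iio_lt (hA : A.IsWF) {x : Γ} (hx : x ∈ A) :
    (A ∩ Iio x).orderTypeLT < A.orderTypeLT := by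
  have := hA.wellFoundedLT
  rw [orderTypeLT_eq_type (A := A)]
  exact (orderTypeLT_inter_Iio_eq_typein ⟨x, hx⟩).trans_lt (typein_lt_type _ _)

theorem exists_orderTypeLT_inter_Iio_eq (hA : A.IsWF) {c : Ordinal} (hc : c < A.orderTypeLT) :
    ∃ x ∈ A, (A ∩ Iio x).orderTypeLT = c := by
  have := hA.wellFoundedLT
  rw [orderTypeLT_eq_type] at hc
  obtain ⟨x, rfl⟩ := typein_surj _ hc
  exact ⟨x, x.2, orderTypeLT_inter_Iio_eq_typein x⟩

theorem orderTypeLT_le_of_forall_lt (hA : A.IsWF) {c : Ordinal}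
    (h : ∀ x ∈ A, (A ∩ Iio x).orderTypeLT < c) : A.orderTypeLT ≤ c := by
  by_contra! hc
  obtain ⟨x, hx, hxc⟩ := exists_orderTypeLT_inter_Iio_eq hA hc
  exact (h x hx).ne hxc

theorem orderTypeLT_singleton_le (a : Γ) : ({a} : Set Γ).orderTypeLT ≤ 1 := by
  refine orderTypeLT_le_of_forall_lt isWF_singleton fun x hx => ?_
  rw [mem_singleton_iff.1 hx, singleton_inter_eq_empty.2 (show a ∉ Iio a from lt_irrefl a),
    orderTypeLT_empty]
  exact zero_lt_one

theorem orderTypeLT_union_of_forall_lt (hA : A.IsWF) (hB : B.IsWF)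
    (h : ∀ a ∈ A, ∀ b ∈ B, a < b) :
    (A ∪ B).orderTypeLT = A.orderTypeLT + B.orderTypeLT := by
  classical
  have hd : Disjoint A B := disjoint_left.2 fun x ha hb => (h x ha x hb).false
  have := hA.wellFoundedLT
  have := hB.wellFoundedLT
  have := (hA.union hB).wellFoundedLT
  rw [orderTypeLT_eq_type, orderTypeLT_eq_type, orderTypeLT_eq_type, ← type_sum_lex]
  refine (RelIso.ordinalType_congr ⟨(Equiv.Set.union hd).symm, ?_⟩).symm
  rintro (a | b) (a' | b')
  · simp
  · simp [h _ a.2 _ b'.2]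
  · simp [(h _ a'.2 _ b.2).not_gt]
  · simp

theorem orderTypeLT_inter_Iio_add_inter_Ici (hA : A.IsWF) (t : Γ) :
    (A ∩ Iio t).orderTypeLT + (A ∩ Ici t).orderTypeLT = A.orderTypeLT := by
  rw [← orderTypeLT_union_of_forall_lt (hA.mono inter_subset_left) (hA.mono inter_subset_left)
    fun a ha b hb => ha.2.trans_le hb.2, ← inter_union_distrib_left, Iio_union_Ici, inter_univ]

theorem orderTypeLT_union_le {A B : Set Γ} (hA : A.IsWF) (hB : B.IsWF) :
    (A ∪ B).orderTypeLT ≤ A.orderTypeLT ♯ B.orderTypeLT := by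
  refine orderTypeLT_le_of_forall_lt (hA.union hB) fun x hx => ?_
  have hlt : (A ∩ Iio x).orderTypeLT ♯ (B ∩ Iio x).orderTypeLT <
      A.orderTypeLT ♯ B.orderTypeLT := by
    rcases hx with hx | hx
    · exact nadd_lt_nadd_of_lt_of_le (orderTypeLT_inter_Iio_lt hA hx)
        (orderTypeLT_mono hB inter_subset_left)
    · exact nadd_lt_nadd_of_le_of_lt (orderTypeLT_mono hA inter_subset_left)
        (orderTypeLT_inter_Iio_lt hB hx)
  rw [union_inter_distrib_right]
  exact (orderTypeLT_union_le (hA.mono inter_subset_left) (hB.mono inter_subset_left)).trans_lt hlt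
termination_by A.orderTypeLT ♯ B.orderTypeLT

theorem orderTypeLT_insert_le (hA : A.IsWF) (a : Γ) :
    (insert a A).orderTypeLT ≤ A.orderTypeLT + 1 := by
  rw [insert_eq]
  calc ({a} ∪ A).orderTypeLT ≤ ({a} : Set Γ).orderTypeLT ♯ A.orderTypeLT :=
        orderTypeLT_union_le isWF_singleton hA
    _ ≤ 1 ♯ A.orderTypeLT := nadd_le_nadd_right (orderTypeLT_singleton_le a) _
    _ = A.orderTypeLT + 1 := by rw [nadd_comm, nadd_one]

theorem exists_union_eq_orderTypeLT_le (hA : A.IsWF) {c d : Ordinal}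
    (h : A.orderTypeLT ≤ c + d) :
    ∃ A₁ A₂ : Set Γ, A₁ ∪ A₂ = A ∧ A₁.orderTypeLT ≤ c ∧ A₂.orderTypeLT ≤ d := by
  rcases le_or_gt A.orderTypeLT c with hc | hc
  · exact ⟨A, ∅, union_empty A, hc, by simp⟩
  obtain ⟨t, -, ht⟩ := exists_orderTypeLT_inter_Iio_eq hA hc
  refine ⟨A ∩ Iio t, A ∩ Ici t, by rw [← inter_union_distrib_left, Iio_union_Ici, inter_univ],
    ht.le, ?_⟩
  rw [← orderTypeLT_inter_Iio_add_inter_Ici hA t, ht] at h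
  exact (add_le_add_iff_left c).1 h

end OrderType

section Sumset

open scoped Pointwise

variable {Γ : Type*} [AddCommMonoid Γ] [LinearOrder Γ]

theorem add_inter_Iio_add_subset [IsOrderedAddMonoid Γ] (A B : Set Γ) (a b : Γ) :
    (A + B) ∩ Iio (a + b) ⊆ (A ∩ Iio a + B) ∪ (A + B ∩ Iio b) := by
  rintro _ ⟨⟨a', ha', b', hb', rfl⟩, hlt⟩
  by_cases h : a' < a
  · exact Or.inl (add_mem_add ⟨ha', h⟩ hb')
  · refine Or.inr (add_mem_add ha' ⟨hb', ?_⟩)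
    by_contra! hb
    exact (add_le_add (not_lt.1 h) (not_lt.1 hb)).not_gt hlt

variable [IsOrderedCancelAddMonoid Γ]

theorem orderTypeLT_add_le_mul_natCast {B : Set Γ} {p P : Ordinal} (hB : B.IsWF)
    (hP : IsPrincipal (· ♯ ·) P)
    (h : ∀ A : Set Γ, A.IsWF → A.orderTypeLT ≤ p → (A + B).orderTypeLT ≤ P) (n : ℕ)
    {A : Set Γ} (hA : A.IsWF) (hAn : A.orderTypeLT ≤ p * n) :
    (A + B).orderTypeLT ≤ P * n := by
  induction n generalizing A with
  | zero =>
    rw [Nat.cast_zero, mul_zero, nonpos_iff_eq_zero, orderTypeLT_eq_zero_iff hA] at hAn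
    simp [hAn]
  | succ n ih =>
    rw [Nat.cast_succ, mul_add_one] at hAn
    obtain ⟨A₁, A₂, rfl, h₁, h₂⟩ := exists_union_eq_orderTypeLT_le hA hAn
    have hA₁ := hA.mono subset_union_left
    have hA₂ := hA.mono subset_union_right
    rw [union_add, Nat.cast_succ, ← mul_nadd_self hP]
    exact (orderTypeLT_union_le (hA₁.add hB) (hA₂.add hB)).trans
      (nadd_le_nadd (ih hA₁ h₁) (h A₂ hA₂ h₂))

theorem orderTypeLT_add_lt_opow {B : Set Γ} {u v : Ordinal} (hB : B.IsWF)
    (h : ∀ w < u, ∀ A : Set Γ, A.IsWF → A.orderTypeLT ≤ ω ^ w →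
      (A + B).orderTypeLT ≤ ω ^ (w ♯ v))
    {A : Set Γ} (hA : A.IsWF) (hAu : A.orderTypeLT < ω ^ u) :
    (A + B).orderTypeLT < ω ^ (u ♯ v) := by
  rcases eq_or_ne u 0 with rfl | hu
  · rw [opow_zero, Order.lt_one_iff, orderTypeLT_eq_zero_iff hA] at hAu
    simp [hAu, opow_pos _ omega0_pos]
  obtain ⟨w, hw, n, hn⟩ := exists_lt_opow_mul_natCast hu hAu
  calc (A + B).orderTypeLT ≤ ω ^ (w ♯ v) * n := orderTypeLT_add_le_mul_natCast hB
        (isPrincipal_nadd_omega0_opow _) (h w hw) n hA hn.le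
    _ < ω ^ (w ♯ v + 1) := omega0_opow_mul_natCast_lt _ n
    _ ≤ ω ^ (u ♯ v) :=
        opow_le_opow_right omega0_pos (Order.add_one_le_of_lt (nadd_lt_nadd_right hw v))

theorem orderTypeLT_add_le {A B : Set Γ} {u v : Ordinal} (hA : A.IsWF) (hB : B.IsWF)
    (hAu : A.orderTypeLT ≤ ω ^ u) (hBv : B.orderTypeLT ≤ ω ^ v) :
    (A + B).orderTypeLT ≤ ω ^ (u ♯ v) := by
  refine orderTypeLT_le_of_forall_lt (hA.add hB) ?_
  rintro _ ⟨a, ha, b, hb, rfl⟩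
  have hAa := hA.mono (inter_subset_left (t := Iio a))
  have hBb := hB.mono (inter_subset_left (t := Iio b))
  have h₁ : (A ∩ Iio a + B).orderTypeLT < ω ^ (u ♯ v) :=
    orderTypeLT_add_lt_opow hB (fun w _ A' hA' hA'w => orderTypeLT_add_le hA' hB hA'w hBv) hAa
      ((orderTypeLT_inter_Iio_lt hA ha).trans_le hAu)
  have h₂ : (A + B ∩ Iio b).orderTypeLT < ω ^ (u ♯ v) := by
    rw [add_comm, nadd_comm]
    refine orderTypeLT_add_lt_opow hA (fun w _ B' hB' hB'w => ?_) hBb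
      ((orderTypeLT_inter_Iio_lt hB hb).trans_le hBv)
    rw [add_comm, nadd_comm]
    exact orderTypeLT_add_le hA hB' hAu hB'w
  calc ((A + B) ∩ Iio (a + b)).orderTypeLT
      ≤ (A ∩ Iio a + B ∪ (A + B ∩ Iio b)).orderTypeLT :=
        orderTypeLT_mono ((hAa.add hB).union (hA.add hBb)) (add_inter_Iio_add_subset A B a b)
    _ ≤ (A ∩ Iio a + B).orderTypeLT ♯ (A + B ∩ Iio b).orderTypeLT :=
        orderTypeLT_union_le (hAa.add hB) (hA.add hBb)
    _ < ω ^ (u ♯ v) := isPrincipal_nadd_omega0_opow _ h₁ h₂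
termination_by u ♯ v
decreasing_by
  · exact nadd_lt_nadd_right ‹_› v
  · exact nadd_lt_nadd_left ‹_› u

theorem IsWF.nsmul {T : Set Γ} (hT : T.IsWF) (k : ℕ) : (k • T).IsWF := by
  induction k with
  | zero => simp [← singleton_zero]
  | succ k ih => rw [succ_nsmul]; exact ih.add hT

theorem orderTypeLT_nsmul_le {T : Set Γ} {u : Ordinal} (hT : T.IsWF)
    (hu : T.orderTypeLT ≤ ω ^ u) (k : ℕ) : (k • T).orderTypeLT ≤ ω ^ (u ⨳ k) := by
  induction k with
  | zero => simpa [← singleton_zero] using orderTypeLT_singleton_le (0 : Γ)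
  | succ k ih =>
    rw [succ_nsmul, nmul_natCast_succ]
    exact orderTypeLT_add_le (hT.nsmul k) hT ih hu

end Sumset

end Set

namespace AddSubmonoid

open scoped Pointwise

variable {Γ : Type*} [AddCommMonoid Γ] [LinearOrder Γ]

theorem exists_le_nsmul_of_mem_closure [IsOrderedAddMonoid Γ] {S : Set Γ} {x : Γ}
    (hx : x ∈ closure S) (hx0 : x ≠ 0) : ∃ t ∈ S, ∃ k : ℕ, x ≤ k • t := by
  obtain ⟨m, hmS, rfl⟩ := exists_multiset_of_mem_closure hx
  have hm : m ≠ 0 := by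
    rintro rfl
    exact hx0 Multiset.sum_zero
  obtain ⟨t, ht, hmax⟩ := Multiset.exists_max_image id hm
  exact ⟨t, hmS t ht, _, Multiset.sum_le_card_nsmul m t hmax⟩

theorem mem_nsmul_insert_zero_add_closure [IsOrderedAddMonoid Γ] {S : Set Γ}
    (hS : ∀ s ∈ S, 0 ≤ s) {t y : Γ} (ht : 0 ≤ t) {k : ℕ} (hy : y ∈ closure S)
    (hyk : y < (k + 1) • t) :
    y ∈ k • insert 0 (S ∩ Set.Ici t) + (closure (S ∩ Set.Iio t) : Set Γ) := by
  classical
  obtain ⟨m, hmS, rfl⟩ := exists_multiset_of_mem_closure hy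
  rw [← Multiset.filter_add_not (t ≤ ·) m, Multiset.sum_add] at hyk ⊢
  have hcard : (m.filter (t ≤ ·)).card ≤ k := by
    by_contra! hk
    have hbig : (k + 1) • t ≤ (m.filter (t ≤ ·)).sum :=
      (nsmul_le_nsmul_left ht hk).trans
        (Multiset.card_nsmul_le_sum fun z hz => (Multiset.mem_filter.1 hz).2)
    have hsmall : 0 ≤ (m.filter (¬ t ≤ ·)).sum :=
      Multiset.sum_nonneg fun z hz => hS z (hmS z (Multiset.mem_of_mem_filter hz))
    exact (hbig.trans (le_add_of_nonneg_right hsmall)).not_gt hyk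
  refine Set.add_mem_add (Set.nsmul_subset_nsmul_right (Set.mem_insert 0 _) hcard ?_)
    (multiset_sum_mem _ _ fun z hz => subset_closure ?_)
  · have := Set.multiset_sum_mem_multiset_sum (m.filter (t ≤ ·))
      (fun _ => insert 0 (S ∩ Set.Ici t)) id fun z hz => Set.mem_insert_of_mem 0
        ⟨hmS z (Multiset.mem_of_mem_filter hz), (Multiset.mem_filter.1 hz).2⟩
    simpa using this
  · obtain ⟨hz, hzt⟩ := Multiset.mem_filter.1 hz
    exact ⟨hmS z hz, not_le.1 hzt⟩

theorem orderTypeLT_closure_le [IsOrderedCancelAddMonoid Γ] {S : Set Γ} (hS0 : ∀ g ∈ S, 0 ≤ g)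
    (hS : S.IsWF) : (closure S : Set Γ).orderTypeLT ≤ ω ^ (ω ⨳ S.orderTypeLT) := by
  refine Set.orderTypeLT_le_of_forall_lt (Set.IsPWO.addSubmonoid_closure hS0 hS.isPWO).isWF
    fun x hx => ?_
  rcases eq_or_ne x 0 with rfl | hx0
  · rw [Set.eq_empty_of_forall_notMem (s := (closure S : Set Γ) ∩ Set.Iio 0) fun y hy =>
      (closure_le.2 (show S ⊆ nonneg Γ from hS0) hy.1 : 0 ≤ y).not_gt hy.2, Set.orderTypeLT_empty]
    exact opow_pos _ omega0_pos
  obtain ⟨t, htS, k, hxk⟩ := exists_le_nsmul_of_mem_closure hx hx0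
  set S₁ := S ∩ Set.Iio t
  set S₂ := S ∩ Set.Ici t
  have hS₁ : S₁.IsWF := hS.mono Set.inter_subset_left
  have hS₂ : S₂.IsWF := hS.mono Set.inter_subset_left
  have hC₁ : (closure S₁ : Set Γ).IsWF :=
    (Set.IsPWO.addSubmonoid_closure (fun g hg => hS0 g hg.1) hS₁.isPWO).isWF
  set δ := log ω S₂.orderTypeLT
  have hδ : S₁.orderTypeLT + ω ^ δ ≤ S.orderTypeLT := by
    rw [← Set.orderTypeLT_inter_Iio_add_inter_Ici hS t]
    refine add_le_add le_rfl (opow_log_le_self _ ?_)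
    rw [Ne, Set.orderTypeLT_eq_zero_iff hS₂, ← Ne, ← Set.nonempty_iff_ne_empty]
    exact ⟨t, htS, le_rfl⟩
  have hT : (insert 0 S₂).orderTypeLT ≤ ω ^ (δ + 1) :=
    (Set.orderTypeLT_insert_le hS₂ 0).trans (Order.add_one_le_of_lt
      (Order.succ_eq_add_one δ ▸ lt_opow_succ_log_self one_lt_omega0 _))
  have hsub : (closure S : Set Γ) ∩ Set.Iio x ⊆ k • insert 0 S₂ + (closure S₁ : Set Γ) :=
    fun y hy => mem_nsmul_insert_zero_add_closure hS0 (hS0 t htS) hy.1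
      (hy.2.trans_le (hxk.trans (nsmul_le_nsmul_left (hS0 t htS) k.le_succ)))
  calc ((closure S : Set Γ) ∩ Set.Iio x).orderTypeLT
      ≤ (k • insert 0 S₂ + (closure S₁ : Set Γ)).orderTypeLT :=
        Set.orderTypeLT_mono (((hS₂.insert 0).nsmul k).add hC₁) hsub
    _ ≤ ω ^ ((δ + 1) ⨳ k ♯ ω ⨳ S₁.orderTypeLT) :=
        Set.orderTypeLT_add_le ((hS₂.insert 0).nsmul k) hC₁
          (Set.orderTypeLT_nsmul_le (hS₂.insert 0) hT k)
          (orderTypeLT_closure_le (fun g hg => hS0 g hg.1) hS₁)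
    _ < ω ^ (ω ⨳ S.orderTypeLT) := (opow_lt_opow_iff_right one_lt_omega0).2
        (nadd_omega0_nmul_lt (nmul_natCast_lt (isPrincipal_nadd_omega0_opow _)
          (add_one_lt_omega0_opow_add_one δ) k) hδ)
termination_by S.orderTypeLT
decreasing_by exact Set.orderTypeLT_inter_Iio_lt hS htS

end AddSubmonoid

/-- If `S` is a well-ordered subset of the strictly positive elements of a linearly ordered
abelian group `Γ`, of order type `α`, then the additive submonoid generated by `S` is itself
well-ordered, of order type at most `ω ^ (ω ⨳ α)` (`⨳` is the natural/Hessenberg product). -/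
theorem addSubmonoid_closure_isWF_orderType_le {Γ : Type*} [AddCommGroup Γ] [LinearOrder Γ]
    [IsOrderedAddMonoid Γ]
    (S : Set Γ) (hSpos : ∀ g ∈ S, 0 < g) (hS : S.IsWF) (α : Ordinal)
    (hα : S.orderTypeLT = α) :
    (AddSubmonoid.closure S : Set Γ).IsWF ∧
      (AddSubmonoid.closure S : Set Γ).orderTypeLT ≤ ω ^ (ω ⨳ α) :=
  have hS0 : ∀ g ∈ S, 0 ≤ g := fun g hg => (hSpos g hg).le
  ⟨(Set.IsPWO.addSubmonoid_closure hS0 hS.isPWO).isWF,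
    hα ▸ AddSubmonoid.orderTypeLT_closure_le hS0 hS⟩
end
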